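/- Let ρ : ℝ → ℝ be nonnegative and locally integrable with F(s) := ∫₀ˢ ρ(u) du unbounded above, and let D(x) := inf{ y ∈ ℝ | F(y) > x } for x ≥ 0. If x ≥ 0 is such that ρ is continuous at D(x) and ρ(D(x)) > 0, then the right derivative of D at x exists and equals 1/ρ(D(x)), i.e. lim_{h↓0} (D(x+h) − D(x))/h = 1/ρ(D(x)). -/

import Mathlib

/-!
`F` is monotone with strict derivative `ρ (D x) ≠ 0` at `D x`, so by the inverse function theorem
it is injective, hence strictly increasing, on a neighbourhood of `D x`. There the quasi-inverse
`y ↦ sInf {z | y < F z}` is a genuine left inverse of `F`, so it inherits the derivative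
`(ρ (D x))⁻¹` at `F (D x) = x`; for `y ≥ 0` it is `D y`.
-/

open MeasureTheory Set Filter Topology

section QuasiInverse

variable {F : ℝ → ℝ}

theorem csInf_setOf_apply_lt_eq_of_strictMonoOn {s : Set ℝ} {w : ℝ} (hmono : Monotone F)
    (hstrict : StrictMonoOn F s) (hs : s ∈ 𝓝 w) : sInf {y | F w < F y} = w := by
  suffices {y | F w < F y} = Ioi w by rw [this, csInf_Ioi]
  ext y
  refine ⟨fun hy => lt_of_not_ge fun hyw => (hmono hyw).not_gt hy, fun hwy => ?_⟩
  obtain ⟨z, hzs, hwz, hzy⟩ := (Filter.Eventually.and (mem_nhdsWithin_of_mem_nhds hs)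
    (Ioo_mem_nhdsGT hwy)).exists
  exact (hstrict (mem_of_mem_nhds hs) hzs hwz).trans_le (hmono hzy.le)

theorem Continuous.apply_csInf_setOf_lt {x : ℝ} (hF : Continuous F)
    (hne : {y | x < F y}.Nonempty) (hbdd : BddBelow {y | x < F y}) :
    F (sInf {y | x < F y}) = x := by
  have hopen : IsOpen {y | x < F y} := isOpen_lt continuous_const hF
  refine le_antisymm (not_lt.1 fun hlt => ?_) ?_
  · obtain ⟨y, hy, hyinf⟩ := (Filter.Eventually.and
      (mem_nhdsWithin_of_mem_nhds (hopen.mem_nhds hlt))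
      (self_mem_nhdsWithin : Iio (sInf {y | x < F y}) ∈ 𝓝[<] _)).exists
    exact (csInf_le hbdd hy).not_gt hyinf
  · exact closure_lt_subset_le continuous_const hF (csInf_mem_closure hne hbdd)

theorem HasStrictDerivAt.hasStrictDerivAt_csInf_setOf_lt {f' c : ℝ} (hF : HasStrictDerivAt F f' c)
    (hf' : f' ≠ 0) (hmono : Monotone F) :
    HasStrictDerivAt (fun x => sInf {y | x < F y}) f'⁻¹ (F c) := by
  have hF' := hF.hasStrictFDerivAt_equiv hf'
  set e := hF'.toOpenPartialHomeomorph F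
  have hstrict : StrictMonoOn F e.source := (hmono.monotoneOn _).strictMonoOn_of_injOn e.injOn
  refine hF.to_local_left_inverse hf' ?_
  filter_upwards [e.open_source.mem_nhds hF'.mem_toOpenPartialHomeomorph_source] with z hz
  exact csInf_setOf_apply_lt_eq_of_strictMonoOn hmono hstrict (e.open_source.mem_nhds hz)

end QuasiInverse

section Primitive

variable {ρ : ℝ → ℝ}

theorem MeasureTheory.LocallyIntegrable.intervalIntegrable (hρ : LocallyIntegrable ρ volume)
    (a b : ℝ) : IntervalIntegrable ρ volume a b :=
  (hρ.integrableOn_isCompact isCompact_uIcc).intervalIntegrable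

theorem monotone_primitive_of_nonneg (hρ : LocallyIntegrable ρ volume) (hnonneg : ∀ u, 0 ≤ ρ u)
    (a : ℝ) : Monotone fun s => ∫ u in a..s, ρ u := fun s t hst => by
  rw [← sub_nonneg, intervalIntegral.integral_interval_sub_left (hρ.intervalIntegrable _ _)
    (hρ.intervalIntegrable _ _)]
  exact intervalIntegral.integral_nonneg hst fun u _ => hnonneg u

end Primitive

/-- If `ρ` is continuous and positive at `D x`, then the right derivative of `D` at
`x` exists and equals `1 / ρ (D x)`. -/
theorem stmt_2 (ρ : ℝ → ℝ) (hρ_nonneg : ∀ u, 0 ≤ ρ u)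
    (hρ_loc : LocallyIntegrable ρ volume)
    (F D : ℝ → ℝ)
    (hF : ∀ s, F s = ∫ u in (0:ℝ)..s, ρ u)
    (hF_unbdd : ∀ M : ℝ, ∃ s, F s > M)
    (hD : ∀ x, 0 ≤ x → D x = sInf {y : ℝ | F y > x})
    (x : ℝ) (hx : 0 ≤ x)
    (hcont : ContinuousAt ρ (D x)) (hpos : 0 < ρ (D x)) :
    Tendsto (fun h => (D (x + h) - D x) / h) (𝓝[>] 0) (𝓝 (1 / ρ (D x))) := by
  have hFeq : F = fun s => ∫ u in (0:ℝ)..s, ρ u := funext hF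
  have hFmono : Monotone F := hFeq ▸ monotone_primitive_of_nonneg hρ_loc hρ_nonneg 0
  have hbdd : BddBelow {y | x < F y} := ⟨0, fun y hy => not_lt.1 fun hy0 =>
    hy.not_ge <| (hFmono hy0.le).trans (by simpa [hF] using hx)⟩
  have hFD : F (D x) = x := by
    rw [hD x hx]
    exact (hFeq ▸ intervalIntegral.continuous_primitive hρ_loc.intervalIntegrable 0 :
      Continuous F).apply_csInf_setOf_lt (hF_unbdd x) hbdd
  have hFderiv : HasStrictDerivAt F (ρ (D x)) (D x) :=
    hFeq ▸ intervalIntegral.integral_hasStrictDerivAt_right (hρ_loc.intervalIntegrable _ _)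
      hρ_loc.aestronglyMeasurable.stronglyMeasurableAtFilter hcont
  have hderiv : HasDerivAt (fun y => sInf {z | y < F z}) (ρ (D x))⁻¹ x := by
    simpa only [hFD] using (hFderiv.hasStrictDerivAt_csInf_setOf_lt hpos.ne' hFmono).hasDerivAt
  rw [one_div]
  refine hderiv.tendsto_slope_zero_right.congr' ?_
  filter_upwards [self_mem_nhdsWithin] with h (hh : 0 < h)
  rw [hD _ hx, hD _ (by linarith), smul_eq_mul, div_eq_inv_mul]
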